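/- arXiv:2603.18938 — 2 statements merged into one kernel-verified Lean document; each statement's English description precedes it below -/
import Mathlib

section
/- Let (Ω, ℱ, P) be a probability space, W : Ω → ℝ^d measurable, p : ℝ^d → (0,1] measurable, and ξ : Ω → {0,1} a random indicator with E[ξ | σ(W)] = p(W) almost surely. Assume ‖W‖₂⁴ / p(W) is integrable and W Wᵀ is integrable entrywise, and set Γ := E[W Wᵀ] and H := (ξ / p(W)) · W Wᵀ. Then E‖H − Γ‖_F² = E[‖W‖₂⁴ / p(W)] − ‖Γ‖_F². Consequently, if p(w) ≥ p⋆ > 0 for all w and E‖W‖₂⁴ ≤ M₄, then E‖H − Γ‖_F² ≤ M₄ / p⋆. -/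
/-!
Since `ξ² = ξ`, the squared Frobenius norm of `H - Γ` expands pointwise into
`ξ ‖W‖₂⁴ / p(W)² - 2 ⟪Γ, (ξ / p(W)) W Wᵀ⟫ + ‖Γ‖_F²`. The conditional-mean assumption
`E[ξ | σ(W)] = p(W)` lets `ξ` be replaced by `p(W)` in front of any `σ(W)`-measurable factor,
so the first term has mean `E[‖W‖₂⁴ / p(W)]` and the weighted Gram matrix is unbiased for `Γ`.
Integrability of `ξ · φ(W)` is the subtle point, since only `p(W) · φ(W)` is assumed integrable:
it comes from the equality of the measures `ξ • P` and `p(W) • P` on `σ(W)`, applied to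
`|φ(W)|` through Lebesgue integrals. The bound follows from `p ≥ p⋆` and `‖Γ‖_F² ≥ 0`.
-/

open MeasureTheory

namespace MeasureTheory

variable {Ω : Type*} {m m₀ : MeasurableSpace Ω} {μ : Measure[m₀] Ω} {f g : Ω → ℝ}

theorem trim_withDensity_ofReal_eq_of_condExp_ae_eq (hm : m ≤ m₀) [SigmaFinite (μ.trim hm)]
    (hf : Integrable f μ) (hf0 : 0 ≤ᵐ[μ] f) (hfg : μ[f|m] =ᵐ[μ] g) :
    (μ.withDensity fun ω => ENNReal.ofReal (f ω)).trim hm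
      = (μ.withDensity fun ω => ENNReal.ofReal (g ω)).trim hm := by
  have hg : Integrable g μ := integrable_condExp.congr hfg
  have hg0 : 0 ≤ᵐ[μ] g := (condExp_nonneg hf0).trans hfg.le
  refine @Measure.ext _ m _ _ fun s hs => ?_
  rw [trim_measurableSet_eq hm hs, trim_measurableSet_eq hm hs, withDensity_apply _ (hm s hs),
    withDensity_apply _ (hm s hs), ← ofReal_integral_eq_lintegral_ofReal hf.restrict
      (ae_restrict_of_ae hf0), ← ofReal_integral_eq_lintegral_ofReal hg.restrict
      (ae_restrict_of_ae hg0), ← setIntegral_condExp hm hf hs,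
    setIntegral_congr_ae (hm s hs) (hfg.mono fun _ h _ => h)]

theorem lintegral_ofReal_mul_eq_of_condExp_ae_eq (hm : m ≤ m₀) [SigmaFinite (μ.trim hm)]
    (hf : Integrable f μ) (hf0 : 0 ≤ᵐ[μ] f) (hfg : μ[f|m] =ᵐ[μ] g) {h : Ω → ENNReal}
    (hh : Measurable[m] h) :
    ∫⁻ ω, ENNReal.ofReal (f ω) * h ω ∂μ = ∫⁻ ω, ENNReal.ofReal (g ω) * h ω ∂μ := by
  have hg : Integrable g μ := integrable_condExp.congr hfg
  have hh₀ : AEMeasurable h μ := (hh.mono hm le_rfl).aemeasurable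
  calc ∫⁻ ω, ENNReal.ofReal (f ω) * h ω ∂μ
      = ∫⁻ ω, h ω ∂(μ.withDensity fun ω => ENNReal.ofReal (f ω)) :=
        (lintegral_withDensity_eq_lintegral_mul₀ hf.1.aemeasurable.ennreal_ofReal hh₀).symm
    _ = ∫⁻ ω, h ω ∂(μ.withDensity fun ω => ENNReal.ofReal (g ω)) := by
        rw [← lintegral_trim hm hh, ← lintegral_trim hm hh,
          trim_withDensity_ofReal_eq_of_condExp_ae_eq hm hf hf0 hfg]
    _ = ∫⁻ ω, ENNReal.ofReal (g ω) * h ω ∂μ :=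
        lintegral_withDensity_eq_lintegral_mul₀ hg.1.aemeasurable.ennreal_ofReal hh₀

theorem Integrable.mul_of_condExp_ae_eq (hm : m ≤ m₀) [SigmaFinite (μ.trim hm)]
    (hf : Integrable f μ) (hf0 : 0 ≤ᵐ[μ] f) (hfg : μ[f|m] =ᵐ[μ] g) {h : Ω → ℝ}
    (hh : StronglyMeasurable[m] h) (hgh : Integrable (fun ω => g ω * h ω) μ) :
    Integrable (fun ω => f ω * h ω) μ := by
  have hg0 : 0 ≤ᵐ[μ] g := (condExp_nonneg hf0).trans hfg.le
  refine ⟨hf.1.mul (hh.mono hm).aestronglyMeasurable, ?_⟩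
  have key := lintegral_ofReal_mul_eq_of_condExp_ae_eq hm hf hf0 hfg hh.enorm
  calc ∫⁻ ω, ‖f ω * h ω‖ₑ ∂μ = ∫⁻ ω, ENNReal.ofReal (f ω) * ‖h ω‖ₑ ∂μ := by
        refine lintegral_congr_ae (hf0.mono fun ω hω => ?_)
        simp [enorm_mul, Real.enorm_of_nonneg hω]
    _ = ∫⁻ ω, ‖g ω * h ω‖ₑ ∂μ := by
        rw [key]
        refine lintegral_congr_ae (hg0.mono fun ω hω => ?_)
        simp [enorm_mul, Real.enorm_of_nonneg hω]
    _ < ⊤ := hgh.2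

theorem integral_mul_eq_of_condExp_ae_eq (hm : m ≤ m₀) [SigmaFinite (μ.trim hm)]
    (hf : Integrable f μ) (hfg : μ[f|m] =ᵐ[μ] g) {h : Ω → ℝ}
    (hh : StronglyMeasurable[m] h) (hfh : Integrable (fun ω => f ω * h ω) μ) :
    ∫ ω, f ω * h ω ∂μ = ∫ ω, g ω * h ω ∂μ := by
  calc ∫ ω, f ω * h ω ∂μ = ∫ ω, μ[f * h|m] ω ∂μ := (integral_condExp hm).symm
    _ = ∫ ω, g ω * h ω ∂μ :=
        integral_congr_ae ((condExp_mul_of_stronglyMeasurable_right hh hfh hf).trans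
          (hfg.mul (Filter.EventuallyEq.refl _ h)))

theorem integrable_of_integrable_div {X q : Ω → ℝ} (hX : AEStronglyMeasurable X μ)
    (hq : ∀ ω, q ω ∈ Set.Ioc 0 1) (hXq : Integrable (fun ω => X ω / q ω) μ) :
    Integrable X μ := by
  refine hXq.mono hX (Filter.Eventually.of_forall fun ω => ?_)
  rw [norm_div, le_div_iff₀ (norm_pos_iff.2 (hq ω).1.ne'), Real.norm_of_nonneg (hq ω).1.le]
  exact mul_le_of_le_one_right (norm_nonneg _) (hq ω).2

theorem integral_div_le_integral_div_of_le {X q : Ω → ℝ} {c : ℝ} (hc : 0 < c)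
    (hcq : ∀ ω, c ≤ q ω) (hX0 : ∀ ω, 0 ≤ X ω) (hX : Integrable X μ)
    (hXq : Integrable (fun ω => X ω / q ω) μ) :
    ∫ ω, X ω / q ω ∂μ ≤ (∫ ω, X ω ∂μ) / c := by
  rw [← integral_div]
  exact integral_mono hXq (hX.div_const c) fun ω => div_le_div_of_nonneg_left (hX0 ω) hc (hcq ω)

theorem integrable_mul_comp_of_condExp_comap {E : Type*} [MeasurableSpace E] [IsFiniteMeasure μ]
    {W : Ω → E} {p : E → ℝ} (hW : Measurable W) (hf : Integrable f μ) (hf0 : 0 ≤ᵐ[μ] f)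
    (hcond : μ[f | MeasurableSpace.comap W inferInstance] =ᵐ[μ] fun ω => p (W ω))
    {φ : E → ℝ} (hφ : Measurable φ) (hpφ : Integrable (fun ω => p (W ω) * φ (W ω)) μ) :
    Integrable (fun ω => f ω * φ (W ω)) μ :=
  hf.mul_of_condExp_ae_eq hW.comap_le hf0 hcond
    (hφ.comp (comap_measurable W)).stronglyMeasurable hpφ

theorem integral_mul_comp_eq_of_condExp_comap {E : Type*} [MeasurableSpace E]
    [IsFiniteMeasure μ] {W : Ω → E} {p : E → ℝ} (hW : Measurable W) (hf : Integrable f μ)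
    (hf0 : 0 ≤ᵐ[μ] f)
    (hcond : μ[f | MeasurableSpace.comap W inferInstance] =ᵐ[μ] fun ω => p (W ω))
    {φ : E → ℝ} (hφ : Measurable φ) (hpφ : Integrable (fun ω => p (W ω) * φ (W ω)) μ) :
    ∫ ω, f ω * φ (W ω) ∂μ = ∫ ω, p (W ω) * φ (W ω) ∂μ :=
  integral_mul_eq_of_condExp_ae_eq hW.comap_le hf hcond
    (hφ.comp (comap_measurable W)).stronglyMeasurable
    (integrable_mul_comp_of_condExp_comap hW hf hf0 hcond hφ hpφ)

theorem integral_sum_sum_const_mul {ι κ : Type*} [Fintype ι] [Fintype κ] (c : ι → κ → ℝ)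
    {X : ι → κ → Ω → ℝ} (hX : ∀ i j, Integrable (X i j) μ) :
    ∫ ω, ∑ i, ∑ j, c i j * X i j ω ∂μ = ∑ i, ∑ j, c i j * ∫ ω, X i j ω ∂μ := by
  rw [integral_finsetSum _ fun i _ => integrable_finsetSum _ fun j _ => (hX i j).const_mul _]
  refine Finset.sum_congr rfl fun i _ => ?_
  rw [integral_finsetSum _ fun j _ => (hX i j).const_mul _]
  simp only [integral_const_mul]

end MeasureTheory

theorem sum_sum_sq_ipw_sub_eq {ι : Type*} [Fintype ι] {ξ q : ℝ} (hξ : ξ * ξ = ξ) (hq : q ≠ 0)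
    (w : ι → ℝ) (Γ : Matrix ι ι ℝ) :
    ∑ i, ∑ j, (ξ / q * (w i * w j) - Γ i j) ^ 2
      = ξ * ((∑ i, w i ^ 2) ^ 2 / q ^ 2) - 2 * ∑ i, ∑ j, Γ i j * (ξ * (w i * w j / q))
        + ∑ i, ∑ j, Γ i j ^ 2 := by
  have hsq : ∀ i j, (ξ / q * (w i * w j) - Γ i j) ^ 2
      = ξ * ((w i ^ 2 * w j ^ 2) / q ^ 2) - 2 * (Γ i j * (ξ * (w i * w j / q))) + Γ i j ^ 2 := by
    intro i j
    field_simp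
    linear_combination (w i ^ 2 * w j ^ 2) * hξ
  rw [sq (∑ i, w i ^ 2), Finset.sum_mul_sum]
  simp only [hsq, Finset.mul_sum, Finset.sum_div, Finset.sum_add_distrib, Finset.sum_sub_distrib]

theorem integral_sum_sum_sq_ipw_sub_eq {Ω ι : Type*} [MeasurableSpace Ω] {P : Measure Ω}
    [IsProbabilityMeasure P] [Fintype ι] {W : Ω → ι → ℝ} {p : (ι → ℝ) → ℝ} {ξ : Ω → ℝ}
    (hW : Measurable W) (hp : Measurable p) (hp0 : ∀ w, p w ≠ 0) (hξ : Measurable ξ)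
    (hξ01 : ∀ ω, ξ ω = 0 ∨ ξ ω = 1)
    (hcond : P[ξ | MeasurableSpace.comap W inferInstance] =ᵐ[P] fun ω => p (W ω))
    (hint4 : Integrable (fun ω => (∑ i, (W ω i) ^ 2) ^ 2 / p (W ω)) P)
    (hintWW : ∀ i j, Integrable (fun ω => W ω i * W ω j) P)
    {Γ : Matrix ι ι ℝ} (hΓ : ∀ i j, Γ i j = ∫ ω, W ω i * W ω j ∂P) :
    ∫ ω, ∑ i, ∑ j, (ξ ω / p (W ω) * (W ω i * W ω j) - Γ i j) ^ 2 ∂P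
      = (∫ ω, (∑ i, (W ω i) ^ 2) ^ 2 / p (W ω) ∂P) - ∑ i, ∑ j, (Γ i j) ^ 2 := by
  have hξ_int : Integrable ξ P := Integrable.of_bound hξ.aestronglyMeasurable 1
    (Filter.Eventually.of_forall fun ω => by rcases hξ01 ω with h | h <;> simp [h])
  have hξ0 : 0 ≤ᵐ[P] ξ :=
    Filter.Eventually.of_forall fun ω => by rcases hξ01 ω with h | h <;> simp [h]
  have hξ_idem : ∀ ω, ξ ω * ξ ω = ξ ω := fun ω => by rcases hξ01 ω with h | h <;> simp [h]
  have hpq : ∀ ω (a : ℝ), p (W ω) * (a / p (W ω) ^ 2) = a / p (W ω) := fun ω a => by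
    field_simp [hp0 (W ω)]
  have hpl : ∀ ω (a : ℝ), p (W ω) * (a / p (W ω)) = a := fun ω a => by
    field_simp [hp0 (W ω)]
  have hφ_meas : Measurable fun w : ι → ℝ => (∑ i, w i ^ 2) ^ 2 / p w ^ 2 := by fun_prop
  have hpφ : Integrable (fun ω => p (W ω) * ((∑ i, W ω i ^ 2) ^ 2 / p (W ω) ^ 2)) P := by
    simpa only [hpq] using hint4
  have hψ_meas : ∀ i j, Measurable fun w : ι → ℝ => w i * w j / p w := by fun_prop
  have hpψ : ∀ i j, Integrable (fun ω => p (W ω) * (W ω i * W ω j / p (W ω))) P := by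
    simpa only [hpl] using hintWW
  have hA_int := integrable_mul_comp_of_condExp_comap hW hξ_int hξ0 hcond hφ_meas hpφ
  have hB_int := fun i j =>
    integrable_mul_comp_of_condExp_comap hW hξ_int hξ0 hcond (hψ_meas i j) (hpψ i j)
  have hcross_int : Integrable
      (fun ω => ∑ i, ∑ j, Γ i j * (ξ ω * (W ω i * W ω j / p (W ω)))) P :=
    integrable_finsetSum _ fun i _ => integrable_finsetSum _ fun j _ => (hB_int i j).const_mul _
  simp only [sum_sum_sq_ipw_sub_eq (hξ_idem _) (hp0 (W _))]
  rw [integral_add ?_ (integrable_const _),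
    integral_sub hA_int (hcross_int.const_mul 2), integral_const_mul,
    integral_sum_sum_const_mul Γ hB_int,
    integral_mul_comp_eq_of_condExp_comap hW hξ_int hξ0 hcond hφ_meas hpφ]
  · simp only [integral_mul_comp_eq_of_condExp_comap hW hξ_int hξ0 hcond (hψ_meas _ _) (hpψ _ _),
      hpq, hpl, ← hΓ, ← sq, integral_const, probReal_univ, one_smul]
    ring
  · exact hA_int.sub (hcross_int.const_mul 2)

/-- Per-step second-moment identity for the centered inverse-propensity-weighted Gram
increment `H - Γ`, where `H = (ξ / p(W)) · W Wᵀ` and `Γ = E[W Wᵀ]`: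
`E‖H - Γ‖_F² = E[‖W‖₂⁴ / p(W)] - ‖Γ‖_F²` (Frobenius norms written as sums of squares,
with `‖W‖₂⁴ = (Σᵢ Wᵢ²)²`).  Consequently, if `p ≥ p⋆ > 0` everywhere and `E‖W‖₂⁴ ≤ M₄`,
then `E‖H - Γ‖_F² ≤ M₄ / p⋆`. -/
theorem ipw_gram_centered_second_moment
    {Ω : Type*} [MeasurableSpace Ω] (P : Measure Ω) [IsProbabilityMeasure P]
    {d : ℕ} (W : Ω → Fin d → ℝ) (hW : Measurable W)
    (p : (Fin d → ℝ) → ℝ) (hp : Measurable p) (hp_mem : ∀ w, p w ∈ Set.Ioc (0 : ℝ) 1)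
    (ξ : Ω → ℝ) (hξ : Measurable ξ) (hξ01 : ∀ ω, ξ ω = 0 ∨ ξ ω = 1)
    (hcond : P[ξ | MeasurableSpace.comap W inferInstance] =ᵐ[P] fun ω => p (W ω))
    (hint4 : Integrable (fun ω => (∑ i, (W ω i) ^ 2) ^ 2 / p (W ω)) P)
    (hintWW : ∀ i j, Integrable (fun ω => W ω i * W ω j) P)
    (Γ : Matrix (Fin d) (Fin d) ℝ) (hΓ : ∀ i j, Γ i j = ∫ ω, W ω i * W ω j ∂P) :
    (∫ ω, ∑ i, ∑ j, (ξ ω / p (W ω) * (W ω i * W ω j) - Γ i j) ^ 2 ∂P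
        = (∫ ω, (∑ i, (W ω i) ^ 2) ^ 2 / p (W ω) ∂P) - ∑ i, ∑ j, (Γ i j) ^ 2) ∧
    (∀ pstar M₄ : ℝ, 0 < pstar → (∀ w, pstar ≤ p w) →
      (∫ ω, (∑ i, (W ω i) ^ 2) ^ 2 ∂P) ≤ M₄ →
      ∫ ω, ∑ i, ∑ j, (ξ ω / p (W ω) * (W ω i * W ω j) - Γ i j) ^ 2 ∂P ≤ M₄ / pstar) := by
  have hmoment := integral_sum_sum_sq_ipw_sub_eq hW hp (fun w => (hp_mem w).1.ne') hξ hξ01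
    hcond hint4 hintWW hΓ
  refine ⟨hmoment, fun pstar M₄ hpstar hle hM₄ => ?_⟩
  have hnorm4_int : Integrable (fun ω => (∑ i, W ω i ^ 2) ^ 2) P :=
    integrable_of_integrable_div (by fun_prop : Measurable _).aestronglyMeasurable
      (fun ω => hp_mem (W ω)) hint4
  calc _ = (∫ ω, (∑ i, W ω i ^ 2) ^ 2 / p (W ω) ∂P) - ∑ i, ∑ j, Γ i j ^ 2 := hmoment
    _ ≤ ∫ ω, (∑ i, W ω i ^ 2) ^ 2 / p (W ω) ∂P := sub_le_self _ (by positivity)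
    _ ≤ (∫ ω, (∑ i, W ω i ^ 2) ^ 2 ∂P) / pstar :=
        integral_div_le_integral_div_of_le hpstar (fun ω => hle (W ω))
          (fun ω => by positivity) hnorm4_int hint4
    _ ≤ M₄ / pstar := by gcongr
end

section
/- Let λ > 0, a > 0, M ≥ 0, let (μ_j)_{j≥1} be a sequence with μ_j ∈ [0, M] for all j, and let (w_j)_{j≥1} be a real square-summable sequence. Define b_j := (λ μ_j^a / (μ_j + λ)) · w_j. Then (b_j) is square-summable and (Σ_j b_j²)^{1/2} ≤ (sup_{μ∈[0,M]} λ μ^a/(μ+λ)) · (Σ_j w_j²)^{1/2}. Moreover, setting ρ := min{a, 1} and C := a^a (1−a)^{1−a} if 0 < a ≤ 1 (with the convention 0⁰ = 1) and C := M^{a−1} if a > 1, one has (Σ_j b_j²)^{1/2} ≤ C · λ^ρ · (Σ_j w_j²)^{1/2}. -/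
/-!
Each `b_j` is `w_j` multiplied by the bias factor `λ t^a / (t + λ)` at `t = μ_j ∈ [0, M]`, so both
`ℓ²` bounds reduce to bounding that factor uniformly on `[0, M]`. For `a ≤ 1`, the weighted
AM–GM inequality `t^a λ^(1-a) ≤ a^a (1-a)^(1-a) (t + λ)` gives `a^a (1-a)^(1-a) λ^a`; for
`a ≥ 1`, writing `t^a = t^(a-1) t` and using `λ t / (t + λ) ≤ λ` gives `M^(a-1) λ`.
-/

open Set

section L2

variable {ι : Type*} {b w : ι → ℝ} {K : ℝ}

lemma sq_le_sq_mul_sq_of_abs_le_mul {x y : ℝ} (h : |x| ≤ K * |y|) : x ^ 2 ≤ K ^ 2 * y ^ 2 := by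
  calc x ^ 2 = |x| ^ 2 := (sq_abs x).symm
    _ ≤ (K * |y|) ^ 2 := pow_le_pow_left₀ (abs_nonneg x) h 2
    _ = K ^ 2 * y ^ 2 := by rw [mul_pow, sq_abs]

lemma summable_sq_of_abs_le_mul (hw : Summable fun j => w j ^ 2)
    (h : ∀ j, |b j| ≤ K * |w j|) : Summable fun j => b j ^ 2 :=
  (hw.mul_left (K ^ 2)).of_nonneg_of_le (fun _ => sq_nonneg _)
    fun j => sq_le_sq_mul_sq_of_abs_le_mul (h j)

lemma sqrt_tsum_sq_le_mul_of_abs_le_mul (hK : 0 ≤ K) (hw : Summable fun j => w j ^ 2)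
    (h : ∀ j, |b j| ≤ K * |w j|) :
    √(∑' j, b j ^ 2) ≤ K * √(∑' j, w j ^ 2) := by
  have htsum : ∑' j, b j ^ 2 ≤ K ^ 2 * ∑' j, w j ^ 2 := by
    rw [← tsum_mul_left]
    exact (summable_sq_of_abs_le_mul hw h).tsum_le_tsum
      (fun j => sq_le_sq_mul_sq_of_abs_le_mul (h j)) (hw.mul_left _)
  calc √(∑' j, b j ^ 2) ≤ √(K ^ 2 * ∑' j, w j ^ 2) := Real.sqrt_le_sqrt htsum
    _ = K * √(∑' j, w j ^ 2) := by rw [Real.sqrt_mul (sq_nonneg K), Real.sqrt_sq hK]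

end L2

section BiasFactor

variable {lam a t M : ℝ}

lemma rpow_mul_rpow_one_sub_le {x y : ℝ} (hx : 0 ≤ x) (hy : 0 ≤ y) (ha : 0 < a) (ha1 : a < 1) :
    x ^ a * y ^ (1 - a) ≤ a ^ a * (1 - a) ^ (1 - a) * (x + y) := by
  have ha1' : 0 < 1 - a := sub_pos.mpr ha1
  have amgm := Real.geom_mean_le_arith_mean2_weighted ha.le ha1'.le
    (div_nonneg hx ha.le) (div_nonneg hy ha1'.le) (add_sub_cancel a 1)
  rw [Real.div_rpow hx ha.le, Real.div_rpow hy ha1'.le,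
    mul_div_cancel₀ x ha.ne', mul_div_cancel₀ y ha1'.ne'] at amgm
  have hC : 0 < a ^ a * (1 - a) ^ (1 - a) := by positivity
  calc x ^ a * y ^ (1 - a)
      = x ^ a / a ^ a * (y ^ (1 - a) / (1 - a) ^ (1 - a)) * (a ^ a * (1 - a) ^ (1 - a)) := by
        field_simp
    _ ≤ (x + y) * (a ^ a * (1 - a) ^ (1 - a)) := mul_le_mul_of_nonneg_right amgm hC.le
    _ = a ^ a * (1 - a) ^ (1 - a) * (x + y) := mul_comm _ _

lemma mul_div_add_le_self (hlam : 0 < lam) (ht : 0 ≤ t) : lam * t / (t + lam) ≤ lam := by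
  rw [div_le_iff₀ (by positivity)]
  nlinarith

lemma bias_factor_nonneg (hlam : 0 < lam) (ht : 0 ≤ t) : 0 ≤ lam * t ^ a / (t + lam) := by
  have := Real.rpow_nonneg ht a
  positivity

lemma bias_factor_le_of_le_one (hlam : 0 < lam) (ha : 0 < a) (ha1 : a ≤ 1) (ht : 0 ≤ t) :
    lam * t ^ a / (t + lam) ≤ a ^ a * (1 - a) ^ (1 - a) * lam ^ a := by
  rcases ha1.lt_or_eq with ha1 | rfl
  · have hsplit : lam ^ a * lam ^ (1 - a) = lam := by
      rw [← Real.rpow_add hlam, add_sub_cancel, Real.rpow_one]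
    rw [div_le_iff₀ (by positivity)]
    calc lam * t ^ a = lam ^ a * (t ^ a * lam ^ (1 - a)) := by
          nth_rw 1 [← hsplit]; ring
      _ ≤ lam ^ a * (a ^ a * (1 - a) ^ (1 - a) * (t + lam)) :=
        mul_le_mul_of_nonneg_left (rpow_mul_rpow_one_sub_le ht hlam.le ha ha1) (by positivity)
      _ = a ^ a * (1 - a) ^ (1 - a) * lam ^ a * (t + lam) := by ring
  · -- the constant is `1 ^ 1 * 0 ^ 0 = 1`
    simpa using mul_div_add_le_self hlam ht

lemma bias_factor_le_of_one_le (hlam : 0 < lam) (ha1 : 1 ≤ a) (ht : 0 ≤ t) (htM : t ≤ M) :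
    lam * t ^ a / (t + lam) ≤ M ^ (a - 1) * lam := by
  have hsplit : t ^ a = t ^ (a - 1) * t := by
    rw [← Real.rpow_add_one' ht (by linarith), sub_add_cancel]
  calc lam * t ^ a / (t + lam) = t ^ (a - 1) * (lam * t / (t + lam)) := by
        rw [hsplit]; ring
    _ ≤ M ^ (a - 1) * lam :=
        mul_le_mul (Real.rpow_le_rpow ht htM (sub_nonneg.mpr ha1)) (mul_div_add_le_self hlam ht)
          (by positivity) (Real.rpow_nonneg (ht.trans htM) _)

lemma bias_factor_le (hlam : 0 < lam) (ha : 0 < a) (ht : t ∈ Icc 0 M) :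
    lam * t ^ a / (t + lam) ≤
      (if a ≤ 1 then a ^ a * (1 - a) ^ (1 - a) else M ^ (a - 1)) * lam ^ min a 1 := by
  split_ifs with ha1
  · rw [min_eq_left ha1]
    exact bias_factor_le_of_le_one hlam ha ha1 ht.1
  · rw [min_eq_right (not_le.mp ha1).le, Real.rpow_one]
    exact bias_factor_le_of_one_le hlam (not_le.mp ha1).le ht.1 ht.2

end BiasFactor

theorem tikhonov_bias_l2_bound_general (lam a M : ℝ) (hlam : 0 < lam) (ha : 0 < a)
    (μ : ℕ → ℝ) (hμ : ∀ j, μ j ∈ Set.Icc 0 M)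
    (w : ℕ → ℝ) (hw : Summable fun j => (w j) ^ 2)
    (b : ℕ → ℝ) (hb : ∀ j, b j = lam * (μ j) ^ a / (μ j + lam) * w j)
    (ρ C : ℝ) (hρ : ρ = min a 1)
    (hC : C = if a ≤ 1 then a ^ a * (1 - a) ^ (1 - a) else M ^ (a - 1)) :
    Summable (fun j => (b j) ^ 2) ∧
    Real.sqrt (∑' j, (b j) ^ 2) ≤
      sSup ((fun t : ℝ => lam * t ^ a / (t + lam)) '' Set.Icc 0 M) *
        Real.sqrt (∑' j, (w j) ^ 2) ∧
    Real.sqrt (∑' j, (b j) ^ 2) ≤ C * lam ^ ρ * Real.sqrt (∑' j, (w j) ^ 2) := by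
  set g : ℝ → ℝ := fun t => lam * t ^ a / (t + lam)
  have hg_le : ∀ y ∈ g '' Icc 0 M, y ≤ C * lam ^ ρ := by
    rintro _ ⟨t, ht, rfl⟩
    subst hC hρ
    exact bias_factor_le hlam ha ht
  have hbdd : BddAbove (g '' Icc 0 M) := ⟨_, hg_le⟩
  have hK0 : 0 ≤ sSup (g '' Icc 0 M) :=
    le_csSup_of_le hbdd (mem_image_of_mem g (hμ 0)) (bias_factor_nonneg hlam (hμ 0).1)
  have hbw : ∀ j, |b j| ≤ sSup (g '' Icc 0 M) * |w j| := fun j => by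
    rw [hb j, abs_mul, abs_of_nonneg (bias_factor_nonneg hlam (hμ j).1)]
    exact mul_le_mul_of_nonneg_right (le_csSup hbdd (mem_image_of_mem g (hμ j))) (abs_nonneg _)
  have hsqrt := sqrt_tsum_sq_le_mul_of_abs_le_mul hK0 hw hbw
  refine ⟨summable_sq_of_abs_le_mul hw hbw, hsqrt, hsqrt.trans ?_⟩
  exact mul_le_mul_of_nonneg_right (csSup_le ⟨_, mem_image_of_mem g (hμ 0)⟩ hg_le)
    (Real.sqrt_nonneg _)

/-- Eigenbasis form of the Tikhonov regularization bias bound: if `μ_j ∈ [0, M]`, `(w_j)`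
is square-summable and `b_j = (λ μ_j^a/(μ_j + λ)) w_j`, then `(b_j)` is square-summable
with `ℓ²`-norm at most `sup_{μ ∈ [0,M]} λ μ^a/(μ+λ)` times the `ℓ²`-norm of `(w_j)`;
moreover, with `ρ = min{a,1}` and the explicit constant `C` (equal to
`a^a (1-a)^{1-a}` when `a ≤ 1`, with the convention `0⁰ = 1`, and `M^{a-1}` when `a > 1`),
the `ℓ²`-norm of `(b_j)` is at most `C λ^ρ` times that of `(w_j)`. -/
theorem tikhonov_bias_l2_bound (lam a M : ℝ) (hlam : 0 < lam) (ha : 0 < a) (hM : 0 ≤ M)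
    (μ : ℕ → ℝ) (hμ : ∀ j, μ j ∈ Set.Icc 0 M)
    (w : ℕ → ℝ) (hw : Summable fun j => (w j) ^ 2)
    (b : ℕ → ℝ) (hb : ∀ j, b j = lam * (μ j) ^ a / (μ j + lam) * w j)
    (ρ C : ℝ) (hρ : ρ = min a 1)
    (hC : C = if a ≤ 1 then a ^ a * (1 - a) ^ (1 - a) else M ^ (a - 1)) :
    Summable (fun j => (b j) ^ 2) ∧
    Real.sqrt (∑' j, (b j) ^ 2) ≤
      sSup ((fun t : ℝ => lam * t ^ a / (t + lam)) '' Set.Icc 0 M) *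
        Real.sqrt (∑' j, (w j) ^ 2) ∧
    Real.sqrt (∑' j, (b j) ^ 2) ≤ C * lam ^ ρ * Real.sqrt (∑' j, (w j) ^ 2) :=
  tikhonov_bias_l2_bound_general lam a M hlam ha μ hμ w hw b hb ρ C hρ hC
end
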